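/- arXiv:1704.01671 — 2 statements merged into one kernel-verified Lean document; each statement's English description precedes it below -/
import Mathlib

section
/- There exists a primitive embedding of the lattice (ℤ¹⁸, M) into the K3 lattice: an injective ℤ-linear map ι : ℤ¹⁸ → ℤ²² with (ι x)ᵀ G (ι y) = xᵀ M y for all x, y ∈ ℤ¹⁸, such that ℤ²² / ι(ℤ¹⁸) is torsion-free. -/
open Matrix

def M : Matrix (Fin 18) (Fin 18) ℤ :=
  !![0, 0, 0, 0, 1, 1, 1, 0, 0, 0, 0, 0, 0, 0, 0, 0, 0, 0;
    0, -2, 0, 0, 0, 0, 1, 1, 0, 0, 0, 0, 0, 1, 0, 0, 0, 0;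
    0, 0, -2, 0, 1, 0, 0, 0, 0, 0, 1, 0, 0, 0, 0, 0, 0, 1;
    0, 0, 0, -2, 0, 1, 0, 0, 0, 1, 0, 0, 0, 0, 0, 0, 0, 0;
    1, 0, 1, 0, -2, 0, 0, 0, 0, 0, 0, 0, 0, 0, 0, 0, 0, 0;
    1, 0, 0, 1, 0, -2, 0, 0, 0, 0, 0, 0, 0, 0, 0, 0, 0, 0;
    1, 1, 0, 0, 0, 0, -2, 0, 0, 0, 0, 0, 0, 0, 0, 0, 0, 0;
    0, 1, 0, 0, 0, 0, 0, -2, 1, 0, 0, 0, 0, 0, 0, 0, 0, 0;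
    0, 0, 0, 0, 0, 0, 0, 1, -2, 1, 0, 0, 0, 0, 0, 0, 0, 0;
    0, 0, 0, 1, 0, 0, 0, 0, 1, -2, 0, 0, 0, 0, 0, 0, 0, 0;
    0, 0, 1, 0, 0, 0, 0, 0, 0, 0, -2, 1, 0, 0, 0, 0, 0, 0;
    0, 0, 0, 0, 0, 0, 0, 0, 0, 0, 1, -2, 1, 0, 0, 0, 0, 0;
    0, 0, 0, 0, 0, 0, 0, 0, 0, 0, 0, 1, -2, 0, 0, 0, 0, 0;
    0, 1, 0, 0, 0, 0, 0, 0, 0, 0, 0, 0, 0, -2, 1, 0, 0, 0;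
    0, 0, 0, 0, 0, 0, 0, 0, 0, 0, 0, 0, 0, 1, -2, 1, 0, 0;
    0, 0, 0, 0, 0, 0, 0, 0, 0, 0, 0, 0, 0, 0, 1, -2, 1, 0;
    0, 0, 0, 0, 0, 0, 0, 0, 0, 0, 0, 0, 0, 0, 0, 1, -2, 1;
    0, 0, 1, 0, 0, 0, 0, 0, 0, 0, 0, 0, 0, 0, 0, 0, 1, -2]

def GK3 : Matrix (Fin 22) (Fin 22) ℤ :=
  !![0, 1, 0, 0, 0, 0, 0, 0, 0, 0, 0, 0, 0, 0, 0, 0, 0, 0, 0, 0, 0, 0;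
    1, 0, 0, 0, 0, 0, 0, 0, 0, 0, 0, 0, 0, 0, 0, 0, 0, 0, 0, 0, 0, 0;
    0, 0, 0, 1, 0, 0, 0, 0, 0, 0, 0, 0, 0, 0, 0, 0, 0, 0, 0, 0, 0, 0;
    0, 0, 1, 0, 0, 0, 0, 0, 0, 0, 0, 0, 0, 0, 0, 0, 0, 0, 0, 0, 0, 0;
    0, 0, 0, 0, 0, 1, 0, 0, 0, 0, 0, 0, 0, 0, 0, 0, 0, 0, 0, 0, 0, 0;
    0, 0, 0, 0, 1, 0, 0, 0, 0, 0, 0, 0, 0, 0, 0, 0, 0, 0, 0, 0, 0, 0;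
    0, 0, 0, 0, 0, 0, -2, 0, 1, 0, 0, 0, 0, 0, 0, 0, 0, 0, 0, 0, 0, 0;
    0, 0, 0, 0, 0, 0, 0, -2, 0, 1, 0, 0, 0, 0, 0, 0, 0, 0, 0, 0, 0, 0;
    0, 0, 0, 0, 0, 0, 1, 0, -2, 1, 0, 0, 0, 0, 0, 0, 0, 0, 0, 0, 0, 0;
    0, 0, 0, 0, 0, 0, 0, 1, 1, -2, 1, 0, 0, 0, 0, 0, 0, 0, 0, 0, 0, 0;
    0, 0, 0, 0, 0, 0, 0, 0, 0, 1, -2, 1, 0, 0, 0, 0, 0, 0, 0, 0, 0, 0;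
    0, 0, 0, 0, 0, 0, 0, 0, 0, 0, 1, -2, 1, 0, 0, 0, 0, 0, 0, 0, 0, 0;
    0, 0, 0, 0, 0, 0, 0, 0, 0, 0, 0, 1, -2, 1, 0, 0, 0, 0, 0, 0, 0, 0;
    0, 0, 0, 0, 0, 0, 0, 0, 0, 0, 0, 0, 1, -2, 0, 0, 0, 0, 0, 0, 0, 0;
    0, 0, 0, 0, 0, 0, 0, 0, 0, 0, 0, 0, 0, 0, -2, 0, 1, 0, 0, 0, 0, 0;
    0, 0, 0, 0, 0, 0, 0, 0, 0, 0, 0, 0, 0, 0, 0, -2, 0, 1, 0, 0, 0, 0;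
    0, 0, 0, 0, 0, 0, 0, 0, 0, 0, 0, 0, 0, 0, 1, 0, -2, 1, 0, 0, 0, 0;
    0, 0, 0, 0, 0, 0, 0, 0, 0, 0, 0, 0, 0, 0, 0, 1, 1, -2, 1, 0, 0, 0;
    0, 0, 0, 0, 0, 0, 0, 0, 0, 0, 0, 0, 0, 0, 0, 0, 0, 1, -2, 1, 0, 0;
    0, 0, 0, 0, 0, 0, 0, 0, 0, 0, 0, 0, 0, 0, 0, 0, 0, 0, 1, -2, 1, 0;
    0, 0, 0, 0, 0, 0, 0, 0, 0, 0, 0, 0, 0, 0, 0, 0, 0, 0, 0, 1, -2, 1;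
    0, 0, 0, 0, 0, 0, 0, 0, 0, 0, 0, 0, 0, 0, 0, 0, 0, 0, 0, 0, 1, -2]


def Aemb : Matrix (Fin 18) (Fin 22) ℤ := !![1, 0, 0, 0, 0, 0, 0, 0, 0, 0, 0, 0, 0, 0, 0, 0, 0, 0, 0, 0, 0, 0;
    0, 0, 0, 0, 0, 0, 0, 0, 0, 0, 0, 1, 0, 0, 0, 0, 0, 0, 0, 0, 0, 0;
    0, 0, 0, 0, 0, 0, 0, 0, 0, 0, 0, 0, 0, 0, 0, 0, 0, 1, 0, 0, 0, 0;
    0, 0, 0, 0, 0, 0, 1, 0, 0, 0, 0, 0, 0, 0, 0, 0, 0, 0, 0, 0, 0, 0;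
    8, 1, 10, 0, -3, -2, 0, 0, 0, 0, 0, 0, 0, 0, -10, -15, -20, -30, -24, -18, -12, -6;
    -71, 1, 5, 0, -27, -3, -9, -13, -17, -25, -20, -15, -10, -5, 0, 0, 0, 0, 0, 0, 0, 0;
    -61, 1, 4, 0, -22, -3, -6, -9, -12, -18, -15, -12, -8, -4, 0, 0, 0, 0, 0, 0, 0, 0;
    0, 0, 0, 0, 0, 0, 0, 0, 0, 0, 1, 0, 0, 0, 0, 0, 0, 0, 0, 0, 0, 0;
    0, 0, 0, 0, 0, 0, 0, 0, 0, 1, 0, 0, 0, 0, 0, 0, 0, 0, 0, 0, 0, 0;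
    0, 0, 0, 0, 0, 0, 0, 0, 1, 0, 0, 0, 0, 0, 0, 0, 0, 0, 0, 0, 0, 0;
    0, 0, 0, 0, 0, 0, 0, 0, 0, 0, 0, 0, 0, 0, 0, 0, 0, 0, 1, 0, 0, 0;
    0, 0, 0, 0, 0, 0, 0, 0, 0, 0, 0, 0, 0, 0, 0, 0, 0, 0, 0, 1, 0, 0;
    0, 0, 0, 0, 0, 0, 0, 0, 0, 0, 0, 0, 0, 0, 0, 0, 0, 0, 0, 0, 1, 0;
    0, 0, 0, 0, 0, 0, 0, 0, 0, 0, 0, 0, 1, 0, 0, 0, 0, 0, 0, 0, 0, 0;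
    0, 0, 0, 0, 0, 0, 0, 0, 0, 0, 0, 0, 0, 1, 0, 0, 0, 0, 0, 0, 0, 0;
    0, 0, 2, 1, 0, 0, -2, -3, -4, -6, -5, -4, -3, -2, -4, -5, -7, -10, -8, -6, -4, -2;
    0, 0, 0, 0, 0, 0, 0, 0, 0, 0, 0, 0, 0, 0, 1, 0, 0, 0, 0, 0, 0, 0;
    0, 0, 0, 0, 0, 0, 0, 0, 0, 0, 0, 0, 0, 0, 0, 0, 1, 0, 0, 0, 0, 0]

def Bret : Matrix (Fin 22) (Fin 18) ℤ := !![1, 0, 0, 0, 0, 0, 0, 0, 0, 0, 0, 0, 0, 0, 0, 0, 0, 0;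
    25, 99, 28, -14, -40, -6, 43, -42, -29, -73, 30, 24, 22, 70, 37, 0, -37, -85;
    30, -3, -44, -14, -45, -40, 26, -39, -31, -57, -26, 21, -20, 57, 58, 0, -57, -11;
    -56, -62, 23, 90, 63, 46, -89, 73, 73, 61, 49, 17, 63, -61, -40, 1, 44, 36;
    48, 30, -40, -49, -61, -49, 59, -60, -54, -70, -38, 9, -40, 71, 61, 0, -61, -27;
    -159, -78, 127, 163, 179, 151, -183, 177, 165, 193, 131, -12, 139, -199, -173, 0, 173, 62;
    0, 0, 0, 1, 0, 0, 0, 0, 0, 0, 0, 0, 0, 0, 0, 0, 0, 0;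
    -55, -39, 39, 57, 65, 51, -67, 64, 58, 72, 41, -6, 45, -75, -62, 0, 62, 31;
    0, 0, 0, 0, 0, 0, 0, 0, 0, 1, 0, 0, 0, 0, 0, 0, 0, 0;
    0, 0, 0, 0, 0, 0, 0, 0, 1, 0, 0, 0, 0, 0, 0, 0, 0, 0;
    0, 0, 0, 0, 0, 0, 0, 1, 0, 0, 0, 0, 0, 0, 0, 0, 0, 0;
    0, 1, 0, 0, 0, 0, 0, 0, 0, 0, 0, 0, 0, 0, 0, 0, 0, 0;
    0, 0, 0, 0, 0, 0, 0, 0, 0, 0, 0, 0, 0, 1, 0, 0, 0, 0;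
    0, 0, 0, 0, 0, 0, 0, 0, 0, 0, 0, 0, 0, 0, 1, 0, 0, 0;
    0, 0, 0, 0, 0, 0, 0, 0, 0, 0, 0, 0, 0, 0, 0, 0, 1, 0;
    25, -9, -40, -17, -34, -41, 26, -38, -25, -63, -32, 25, -16, 43, 46, 0, -46, -24;
    0, 0, 0, 0, 0, 0, 0, 0, 0, 0, 0, 0, 0, 0, 0, 0, 0, 1;
    0, 0, 1, 0, 0, 0, 0, 0, 0, 0, 0, 0, 0, 0, 0, 0, 0, 0;
    0, 0, 0, 0, 0, 0, 0, 0, 0, 0, 1, 0, 0, 0, 0, 0, 0, 0;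
    0, 0, 0, 0, 0, 0, 0, 0, 0, 0, 0, 1, 0, 0, 0, 0, 0, 0;
    0, 0, 0, 0, 0, 0, 0, 0, 0, 0, 0, 0, 1, 0, 0, 0, 0, 0;
    22, 45, 4, -13, -26, 9, 17, -6, -22, 21, 13, -27, -18, 30, 15, 0, -15, 17]

set_option maxRecDepth 40000 in
set_option maxHeartbeats 2000000 in
lemma hAGA : Aemb * (GK3 * Aembᵀ) = M := by decide

set_option maxRecDepth 40000 in
set_option maxHeartbeats 2000000 in
lemma hAB : Aemb * Bret = 1 := by decide

theorem stmt_18 :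
    ∃ ι : (Fin 18 → ℤ) →ₗ[ℤ] (Fin 22 → ℤ),
      Function.Injective ι ∧
      (∀ x y : Fin 18 → ℤ, ι x ⬝ᵥ (GK3 *ᵥ ι y) = x ⬝ᵥ (M *ᵥ y)) ∧
      (∀ (v : Fin 22 → ℤ) (k : ℤ), k ≠ 0 → k • v ∈ LinearMap.range ι → v ∈ LinearMap.range ι) := by
  refine ⟨Aembᵀ.mulVecLin, ?_, ?_, ?_⟩
  · intro x y h
    have h2 : Bretᵀ *ᵥ (Aembᵀ *ᵥ x) = Bretᵀ *ᵥ (Aembᵀ *ᵥ y) := by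
      simp only [Matrix.mulVecLin_apply] at h
      rw [h]
    simpa [Matrix.mulVec_mulVec, ← Matrix.transpose_mul, hAB] using h2
  · intro x y
    simp only [Matrix.mulVecLin_apply]
    rw [Matrix.mulVec_mulVec, Matrix.mulVec_transpose, Matrix.dotProduct_mulVec,
      Matrix.vecMul_vecMul, ← Matrix.dotProduct_mulVec, hAGA]
  · rintro v k hk ⟨x, hx⟩
    refine ⟨Bretᵀ *ᵥ v, ?_⟩
    simp only [Matrix.mulVecLin_apply] at hx ⊢
    have h1 : ∀ w : Fin 18 → ℤ, Bretᵀ *ᵥ (Aembᵀ *ᵥ w) = w := by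
      intro w
      rw [Matrix.mulVec_mulVec, ← Matrix.transpose_mul, hAB, Matrix.transpose_one,
        Matrix.one_mulVec]
    have hxv : x = k • (Bretᵀ *ᵥ v) := by
      rw [← h1 x, hx, Matrix.mulVec_smul]
    have h2 : k • (Aembᵀ *ᵥ (Bretᵀ *ᵥ v)) = k • v := by
      rw [← Matrix.mulVec_smul, ← hxv, hx]
    exact smul_right_injective _ hk h2
end

section
/- There exists a primitive embedding ι : ℤ¹⁸ → ℤ²² of (ℤ¹⁸, M) into the K3 lattice together with an injective ℤ-linear map j : ℤ⁴ → ℤ²² whose image equals the orthogonal complement {v ∈ ℤ²² | vᵀ G (ι x) = 0 for all x ∈ ℤ¹⁸} and which satisfies (j a)ᵀ G (j b) = aᵀ (U ⊕ M') b for all a, b ∈ ℤ⁴, where U ⊕ M' is the 4×4 block-diagonal matrix built from U = [[0,1],[1,0]] and M'. (Lattice duality for the transpose-dual pair (W_{1,0}, W_{1,0}): the orthogonal complement of Pic_Δ in the K3 lattice is isometric to U ⊕ Pic_{Δ'}.) -/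
open Matrix

def UM' : Matrix (Fin 4) (Fin 4) ℤ :=
  !![0, 1, 0, 0;
    1, 0, 0, 0;
    0, 0, 0, 2;
    0, 0, 2, -2]

def AA : Matrix (Fin 22) (Fin 18) ℤ :=
  !![0, 0, 0, 0, 0, 0, 0, 0, 0, 0, 0, 0, 0, 0, 0, 0, 0, 0;
    0, 0, 0, 0, 0, 0, 0, 0, 0, 0, 0, 0, 0, 0, 0, 0, 0, 0;
    1, 1, 1, 0, 0, 1, 0, 0, 0, 0, 0, 0, 0, -1, 1, -1, 1, -1;
    0, 0, 0, 0, 1, 1, 1, 0, 0, 0, 0, 0, 0, 0, 0, 0, 0, 0;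
    0, 0, -149, -48, -112, -92, -130, 62, -55, 41, 121, 14, -21, -72, 79, -100, 107, 14;
    0, 0, -21, -7, -16, -13, -19, 9, -8, 6, 17, 2, -3, -10, 11, -14, 15, 2;
    0, 0, 17, 5, 12, 10, 15, -7, 7, -5, -12, -3, 2, 8, -9, 11, -12, -2;
    0, 0, 17, 5, 12, 10, 15, -7, 7, -5, -11, -4, 2, 8, -9, 11, -12, -2;
    0, 0, -9, -4, -8, -6, -8, 5, -3, 2, 11, -2, -2, -5, 5, -7, 7, 0;
    0, 0, -9, -4, -9, -6, -8, 5, -3, 2, 13, -4, -2, -5, 5, -7, 7, 0;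
    0, 0, 10, 2, 6, 6, 9, -3, 4, -3, -4, -5, 1, 4, -5, 6, -7, -1;
    0, 0, 0, -1, -2, -1, 0, 1, 0, 0, 3, -3, 0, -1, 0, 0, 0, 0;
    0, 1, 0, -1, -1, 0, 0, 0, 0, 0, 2, -2, 0, -1, 0, 0, 0, 0;
    0, 1, 0, 0, 0, 0, 0, 0, 0, 0, 1, -1, 0, -1, 0, 0, 0, 0;
    0, 0, -56, -18, -42, -35, -50, 23, -20, 15, 45, 5, -7, -25, 27, -36, 39, 6;
    0, 0, -3, 0, -2, -2, -3, 1, 0, -1, 2, 0, 1, 1, -2, 0, 1, 1;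
    0, 0, -30, -9, -22, -19, -27, 12, -10, 7, 24, 2, -2, -11, 11, -17, 19, 4;
    0, 0, -30, -9, -22, -18, -27, 12, -9, 6, 24, 2, -1, -10, 9, -16, 19, 4;
    0, 0, -30, -9, -22, -18, -27, 12, -9, 6, 24, 2, -2, -11, 10, -16, 19, 4;
    0, 0, -30, -9, -22, -18, -27, 12, -9, 6, 24, 2, -2, -12, 12, -17, 19, 4;
    0, 0, -20, -6, -14, -12, -18, 8, -6, 4, 16, 1, -1, -8, 8, -11, 13, 2;
    0, 0, -10, -3, -7, -6, -9, 4, -3, 2, 8, 1, -1, -4, 4, -5, 6, 1]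
def BB : Matrix (Fin 22) (Fin 4) ℤ :=
  !![1, 0, 0, 0;
    0, 1, 0, 0;
    0, 0, 1, 0;
    0, 0, 0, 0;
    0, 0, 79, 321;
    0, 0, 11, 46;
    0, 0, -9, -35;
    0, 0, -9, -35;
    0, 0, 5, 23;
    0, 0, 5, 24;
    0, 0, -5, -19;
    0, 0, 0, 3;
    0, 0, 0, 2;
    0, 0, 0, 1;
    0, 0, 29, 118;
    0, 0, 1, 2;
    0, 0, 15, 58;
    0, 0, 15, 56;
    0, 0, 15, 57;
    0, 0, 15, 59;
    0, 0, 10, 39;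
    0, 0, 5, 19]
def LL : Matrix (Fin 18) (Fin 22) ℤ :=
  !![0, 0, 1, -167, 63, 63, 0, 41, -16, -90, 180, -115, 0, -1, -171, -24, 59, 38, 43, -74, 0, 41;
    0, 0, 0, 372, -141, -151, 0, -96, 36, 202, -400, 256, 0, 1, 385, 52, -130, -87, -94, 164, 0, -90;
    0, 0, 0, 1325, -497, -499, 0, -320, 127, 708, -1423, 912, 0, 0, 1347, 188, -455, -312, -329, 584, -1, -327;
    0, 0, 0, -368, 138, 139, 0, 89, -36, -196, 395, -253, -1, 1, -374, -52, 126, 87, 91, -162, 0, 91;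
    0, 0, 0, 736, -276, -278, 0, -178, 71, 393, -790, 506, 0, 0, 748, 104, -252, -174, -182, 324, 0, -182;
    0, 0, 0, -681, 256, 262, 0, 167, -66, -365, 732, -469, 0, 0, -695, -96, 234, 161, 169, -300, 0, 168;
    0, 0, 0, -54, 20, 16, 0, 11, -5, -28, 58, -37, 0, 0, -53, -8, 18, 13, 13, -24, 0, 14;
    0, 0, 0, 59, -23, -28, 0, -18, 6, 33, -63, 41, -1, 1, 64, 8, -22, -13, -16, 26, 0, -13;
    0, 0, 0, 8, -4, -10, 0, -5, 1, 6, -9, 6, -1, 1, 13, 0, -5, -1, -3, 4, 0, -1;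
    0, 0, 0, -18, 6, 2, 0, 2, -2, -8, 19, -12, -1, 1, -15, -4, 5, 5, 4, -8, 0, 5;
    0, 0, 0, 817, -306, -306, 0, -196, 78, 436, -877, 562, 0, 0, 829, 116, -280, -192, -203, 360, -1, -201;
    0, 0, 0, 449, -168, -167, 0, -107, 43, 239, -482, 309, 0, 0, 455, 64, -154, -105, -112, 198, -1, -110;
    0, 0, 0, -89, 34, 38, 0, 24, -9, -49, 96, -61, 0, 0, -93, -12, 31, 22, 21, -39, 0, 22;
    0, 0, 0, 740, -279, -290, 0, -185, 71, 399, -795, 509, 0, 0, 759, 104, -256, -174, -185, 326, 0, -181;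
    0, 0, 0, 651, -245, -252, 0, -161, 62, 350, -699, 448, 0, 0, 666, 92, -225, -153, -163, 287, 0, -159;
    0, 0, 0, 1306, -491, -502, 0, -321, 125, 701, -1403, 899, 0, 0, 1333, 184, -450, -308, -324, 575, 0, -321;
    0, 0, 0, 1844, -693, -707, 0, -452, 177, 989, -1981, 1269, 0, 0, 1881, 260, -635, -435, -457, 812, 0, -455;
    0, 0, 0, 1298, -487, -492, 0, -315, 124, 694, -1393, 893, 0, 0, 1321, 184, -446, -306, -322, 572, -1, -320]
def DD : Matrix (Fin 22) (Fin 18) ℤ :=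
  !![0, 0, 0, 0, 0, 0, 0, 0, 0, 0, 0, 0, 0, 0, 0, 0, 0, 0;
    0, 0, 0, 0, 0, 0, 0, 0, 0, 0, 0, 0, 0, 0, 0, 0, 0, 0;
    75, 8, -66, 0, 0, 6, -5, 14, 4, -51, -34, -34, 76, 8, -91, -53, 4, -19;
    1, 0, 0, 0, 0, 0, 0, 0, 0, 0, 0, 0, 0, 0, 0, 0, 0, 0;
    -400, -17, 357, 0, 0, -35, 35, -52, -5, 284, 196, 196, -409, -17, 515, 314, -12, 111;
    -81, -5, 72, 0, 0, -7, 7, -12, -2, 57, 39, 39, -83, -5, 103, 62, -3, 22;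
    16, -4, -13, 0, 1, 2, -3, -2, -3, -12, -8, -7, 16, -3, -22, -14, 0, -4;
    17, -3, -18, 1, -1, 3, -2, -1, -2, -11, -12, -9, 15, -3, -23, -16, -3, -8;
    -75, -10, 66, 1, 0, -5, 5, -16, -5, 54, 34, 37, -79, -9, 95, 56, -5, 19;
    -93, -14, 81, 1, 0, -6, 6, -21, -7, 67, 41, 46, -99, -13, 117, 68, -8, 22;
    3, -7, -4, 1, 0, 2, -2, -6, -4, -1, -4, 0, 0, -6, -5, -5, -4, -4;
    -56, -10, 48, 1, 0, -3, 3, -14, -5, 40, 24, 27, -60, -9, 69, 39, -6, 12;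
    -37, -7, 32, 1, 0, -2, 2, -9, -3, 27, 16, 18, -40, -6, 46, 26, -4, 8;
    -18, -4, 16, 0, 0, -1, 1, -5, -2, 13, 8, 9, -20, -3, 23, 13, -2, 4;
    -151, -8, 134, 0, 0, -13, 13, -21, -3, 106, 73, 73, -154, -8, 193, 117, -5, 41;
    34, 2, -31, 0, 0, 3, -3, 5, 1, -24, -17, -17, 35, 2, -43, -26, 1, -10;
    -21, 1, 18, 0, 0, -2, 2, -1, 1, 14, 10, 10, -20, 1, 28, 18, 1, 6;
    18, 4, -17, 0, 0, 1, -1, 5, 2, -13, -9, -9, 19, 4, -20, -11, 2, -5;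
    -2, 4, 1, 0, 0, -1, 1, 3, 2, 1, 1, 1, 0, 4, 5, 4, 2, 1;
    -40, 0, 35, 0, 0, -4, 4, -4, 0, 28, 19, 19, -40, 0, 52, 32, 0, 11;
    -20, 0, 18, 0, 0, -2, 2, -2, 0, 14, 10, 10, -20, 0, 26, 16, 0, 6;
    0, 0, 0, 0, 0, 0, 0, 0, 0, 0, 0, 0, 0, 0, 0, 0, 0, 0]
def CC : Matrix (Fin 4) (Fin 22) ℤ :=
  !![1, 0, 0, 0, 0, 0, 0, 0, 0, 0, 0, 0, 0, 0, 0, 0, 0, 0, 0, 0, 0, 0;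
    0, 1, 0, 0, 0, 0, 0, 0, 0, 0, 0, 0, 0, 0, 0, 0, 0, 0, 0, 0, 0, 0;
    0, 0, 0, 0, 0, 0, 0, 0, 0, 0, 0, 0, 0, 0, 0, 76, 0, 0, -38, 0, 133, -167;
    0, 0, 0, 0, 0, 0, 0, 0, 0, 0, 0, 0, 0, 0, 0, -20, 0, 0, 10, 0, -35, 44]
def EE : Matrix (Fin 4) (Fin 22) ℤ :=
  !![1, 0, 0, 0, 0, 0, 0, 0, 0, 0, 0, 0, 0, 0, 0, 0, 0, 0, 0, 0, 0, 0;
    0, 1, 0, 0, 0, 0, 0, 0, 0, 0, 0, 0, 0, 0, 0, 0, 0, 0, 0, 0, 0, 0;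
    0, 0, 1, 0, 0, 0, 0, 0, 0, 0, 0, 0, 0, 0, 0, 0, 0, 0, 0, 0, 0, 0;
    0, 0, 0, 0, 0, 0, 0, 0, 0, 0, 0, 0, 0, 1, 0, 0, 0, 0, 0, 0, 0, 0]

section certs
set_option maxRecDepth 4000000
set_option maxHeartbeats 16000000

theorem f1 : AAᵀ * GK3 * AA = M := by decide
theorem f2 : LL * AA = 1 := by decide
theorem f3 : BBᵀ * GK3 * BB = UM' := by decide
theorem f4 : BBᵀ * GK3 * AA = 0 := by decide
theorem f5 : BB * CC + DD * (AAᵀ * GK3) = 1 := by decide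
theorem f6 : EE * BB = 1 := by decide
theorem f7 : GK3ᵀ = GK3 := by decide

end certs

theorem key {n m : ℕ} (B : Matrix (Fin 22) (Fin n) ℤ) (G : Matrix (Fin 22) (Fin 22) ℤ)
    (A : Matrix (Fin 22) (Fin m) ℤ) (a : Fin n → ℤ) (x : Fin m → ℤ) :
    (B *ᵥ a) ⬝ᵥ (G *ᵥ (A *ᵥ x)) = a ⬝ᵥ ((Bᵀ * G * A) *ᵥ x) := by
  rw [Matrix.mulVec_mulVec, Matrix.dotProduct_mulVec, ← Matrix.vecMul_transpose,
    Matrix.vecMul_vecMul, ← Matrix.dotProduct_mulVec, Matrix.mul_assoc]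

theorem key2 {n : ℕ} (N : Matrix (Fin 22) (Fin n) ℤ) (v : Fin 22 → ℤ) (i : Fin n) :
    v ⬝ᵥ (N *ᵥ Pi.single i 1) = (Nᵀ *ᵥ v) i := by
  simp [Matrix.mulVec, dotProduct, Pi.single_apply, mul_comm]

theorem stmt_19 :
    ∃ ι : (Fin 18 → ℤ) →ₗ[ℤ] (Fin 22 → ℤ),
      Function.Injective ι ∧
      (∀ x y : Fin 18 → ℤ, ι x ⬝ᵥ (GK3 *ᵥ ι y) = x ⬝ᵥ (M *ᵥ y)) ∧
      (∀ (v : Fin 22 → ℤ) (k : ℤ), k ≠ 0 → k • v ∈ LinearMap.range ι → v ∈ LinearMap.range ι) ∧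
      ∃ j : (Fin 4 → ℤ) →ₗ[ℤ] (Fin 22 → ℤ),
        Function.Injective j ∧
        (∀ v : Fin 22 → ℤ, v ∈ LinearMap.range j ↔ ∀ x : Fin 18 → ℤ, v ⬝ᵥ (GK3 *ᵥ ι x) = 0) ∧
        (∀ a b : Fin 4 → ℤ, j a ⬝ᵥ (GK3 *ᵥ j b) = a ⬝ᵥ (UM' *ᵥ b)) := by
  refine ⟨Matrix.mulVecLin AA, ?_, ?_, ?_, Matrix.mulVecLin BB, ?_, ?_, ?_⟩
  · intro x y h
    have h2 : LL *ᵥ (AA *ᵥ x) = LL *ᵥ (AA *ᵥ y) := by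
      simpa [Matrix.mulVecLin_apply] using congrArg (fun v => LL *ᵥ v) h
    simpa [Matrix.mulVec_mulVec, f2, Matrix.one_mulVec] using h2
  · intro x y
    simp only [Matrix.mulVecLin_apply]
    rw [key AA GK3 AA, f1]
  · rintro v k hk ⟨x, hx⟩
    refine ⟨LL *ᵥ v, ?_⟩
    simp only [Matrix.mulVecLin_apply] at hx ⊢
    have h2 : AA *ᵥ (LL *ᵥ (k • v)) = k • v := by
      rw [← hx, Matrix.mulVec_mulVec, Matrix.mulVec_mulVec, Matrix.mul_assoc, f2,
        Matrix.mul_one]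
    rw [Matrix.mulVec_smul] at h2
    rw [Matrix.mulVec_smul] at h2
    exact smul_right_injective (Fin 22 → ℤ) hk h2
  · intro a b h
    have h2 : EE *ᵥ (BB *ᵥ a) = EE *ᵥ (BB *ᵥ b) := by
      simpa [Matrix.mulVecLin_apply] using congrArg (fun v => EE *ᵥ v) h
    simpa [Matrix.mulVec_mulVec, f6, Matrix.one_mulVec] using h2
  · intro v
    constructor
    · rintro ⟨a, rfl⟩ x
      simp only [Matrix.mulVecLin_apply]
      rw [key BB GK3 AA, f4, Matrix.zero_mulVec, dotProduct_zero]
    · intro h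
      refine ⟨CC *ᵥ v, ?_⟩
      have hz : (AAᵀ * GK3) *ᵥ v = 0 := by
        funext i
        have h3 := h (Pi.single i 1)
        rw [Matrix.mulVecLin_apply, Matrix.mulVec_mulVec, key2 (GK3 * AA) v i,
          Matrix.transpose_mul, f7] at h3
        simpa using h3
      have h4 : (BB * CC + DD * (AAᵀ * GK3)) *ᵥ v = v := by rw [f5, Matrix.one_mulVec]
      rw [Matrix.add_mulVec, ← Matrix.mulVec_mulVec, ← Matrix.mulVec_mulVec, hz,
        Matrix.mulVec_zero, add_zero] at h4
      simpa [Matrix.mulVecLin_apply] using h4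
  · intro a b
    simp only [Matrix.mulVecLin_apply]
    rw [key BB GK3 BB, f3]
end
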